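/- Let p be a prime and d a positive integer dividing p−1. Then the number of pairs (b, r) of nonnegative integers satisfying both r·d + b·p ≤ (p−1)(d−1) − 2 and r·d ≥ (b+1)(p−1) equals (p−1)(d−2)/4 if d is even, and equals (p−1)(d−1)²/(4d) if d is odd. -/

import Mathlib

/-!
Write `p - 1 = γ d`. Dividing both inequalities by `d` shows that `(b, r)` is counted exactly when
`γ (b + 1) ≤ r < γ (d - 1 - b)`: the extra `b + 2` in the first inequality lies in `(0, d]`, so it
only turns `≤` into `<`. Hence the count is
`γ ∑_{b < d} (d - 2 (b + 1))⁺ = γ ⌊(d - 1)² / 4⌋`, which is each of the two closed forms.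
-/

open Finset

theorem sum_range_sub_two_mul_succ (n : ℕ) :
    ∑ b ∈ range n, (n - 2 * (b + 1)) = (n - 1) ^ 2 / 4 := by
  induction n using Nat.twoStepInduction with
  | zero => simp
  | one => simp
  | more n ih _ =>
    have hshift : ∑ b ∈ range (n + 2), (n + 2 - 2 * (b + 1)) =
        ∑ b ∈ range n, (n - 2 * (b + 1)) + n := by
      rw [sum_range_succ', sum_range_succ]
      simp only [show ∀ b, n + 2 - 2 * (b + 1 + 1) = n - 2 * (b + 1) by omega]
      omega
    rw [hshift, ih]
    rcases n with _ | n
    · rfl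
    · have hsq : (n + 1 + 2 - 1) ^ 2 = n ^ 2 + 4 * (n + 1) := by
        rw [show n + 1 + 2 - 1 = n + 2 by omega]; ring
      rw [hsq, Nat.add_mul_div_left _ _ four_pos, Nat.add_sub_cancel]

theorem card_setOf_nonneg_int_prod (P : ℤ × ℤ → Prop) :
    Nat.card {x : ℤ × ℤ | 0 ≤ x.1 ∧ 0 ≤ x.2 ∧ P x} = Nat.card {y : ℕ × ℕ | P (y.1, y.2)} :=
  Nat.card_congr
    { toFun := fun x => ⟨(x.1.1.toNat, x.1.2.toNat), by
        obtain ⟨⟨a, b⟩, ha, hb, h⟩ := x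
        simpa [ha, hb] using h⟩
      invFun := fun y => ⟨((y.1.1 : ℤ), (y.1.2 : ℤ)), by positivity, by positivity, y.2⟩
      left_inv := fun x => by
        obtain ⟨⟨a, b⟩, ha, hb, h⟩ := x
        simp [ha, hb]
      right_inv := fun y => by simp }

theorem card_setOf_fst_lt_snd_mem_Ico (n : ℕ) (f g : ℕ → ℕ) :
    Nat.card {y : ℕ × ℕ | y.1 < n ∧ f y.1 ≤ y.2 ∧ y.2 < g y.1} = ∑ b ∈ range n, (g b - f b) := by
  have : {y : ℕ × ℕ | y.1 < n ∧ f y.1 ≤ y.2 ∧ y.2 < g y.1} =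
      ((range n).sigma fun b => Ico (f b) (g b)).map (Equiv.sigmaEquivProd ℕ ℕ).toEmbedding := by
    ext ⟨b, r⟩
    simp
  rw [this, Nat.card_coe_set_eq, Set.ncard_coe_finset, card_map, card_sigma]
  simp only [Nat.card_Ico]

theorem four_mul_sq_pred_div_four_of_even {d : ℕ} (hd : Even d) :
    4 * ((d - 1) ^ 2 / 4) = d * (d - 2) := by
  obtain ⟨_ | k, rfl⟩ := hd
  · rfl
  · have hsq : (k + 1 + (k + 1) - 1) ^ 2 = 1 + 4 * (k * (k + 1)) := by
      rw [show k + 1 + (k + 1) - 1 = 2 * k + 1 by omega]; ring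
    rw [hsq, Nat.add_mul_div_left _ _ four_pos, show k + 1 + (k + 1) - 2 = 2 * k by omega]
    ring

theorem four_mul_sq_pred_div_four_of_odd {d : ℕ} (hd : Odd d) :
    4 * ((d - 1) ^ 2 / 4) = (d - 1) ^ 2 := by
  obtain ⟨k, rfl⟩ := hd
  rw [Nat.add_sub_cancel, mul_pow, show 2 ^ 2 = 4 by rfl, Nat.mul_div_cancel_left _ four_pos]

theorem H_infty_ineqs_iff {p γ d b r : ℤ} (hp : p - 1 = γ * d) (hγ : 0 ≤ γ) (hd : 0 < d)
    (hb : 0 ≤ b) :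
    (r * d + b * p ≤ (p - 1) * (d - 1) - 2 ∧ (b + 1) * (p - 1) ≤ r * d) ↔
      b < d ∧ γ * (b + 1) ≤ r ∧ r < γ * (d - 1 - b) := by
  obtain rfl : p = γ * d + 1 := by linarith
  constructor
  · rintro ⟨hupper, hlower⟩
    have hr : γ * (b + 1) ≤ r := le_of_mul_le_mul_right (by linarith) hd
    have hr' : r < γ * (d - 1 - b) := lt_of_mul_lt_mul_right (by nlinarith) hd.le
    have : b + 1 < d - 1 - b := lt_of_mul_lt_mul_left (hr.trans_lt hr') hγ
    exact ⟨by linarith, hr, hr'⟩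
  · rintro ⟨-, hr, hr'⟩
    have : b + 1 < d - 1 - b := lt_of_mul_lt_mul_left (hr.trans_lt hr') hγ
    constructor
    · nlinarith
    · nlinarith

/-- The number of pairs `(b, r)` of nonnegative integers with
`r·d + b·p ≤ (p−1)(d−1) − 2` and `r·d ≥ (b+1)(p−1)` equals `(p−1)(d−2)/4` if `d` is
even and `(p−1)(d−1)²/(4d)` if `d` is odd. -/
theorem stmt_10 (p d : ℕ) (hp : p.Prime) (hd : 0 < d) (hdvd : d ∣ p - 1) :
    Nat.card {x : ℤ × ℤ | 0 ≤ x.1 ∧ 0 ≤ x.2 ∧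
        x.2 * d + x.1 * p ≤ ((p : ℤ) - 1) * ((d : ℤ) - 1) - 2 ∧
        (x.1 + 1) * ((p : ℤ) - 1) ≤ x.2 * d} =
      if Even d then (p - 1) * (d - 2) / 4 else (p - 1) * (d - 1) ^ 2 / (4 * d) := by
  obtain ⟨γ, hγ⟩ := hdvd
  have hpγ : (p : ℤ) - 1 = γ * d := by
    rw [← Nat.cast_one, ← Nat.cast_sub hp.one_lt.le, hγ]; push_cast; ring
  have hH : {y : ℕ × ℕ | (y.2 : ℤ) * d + (y.1 : ℤ) * p ≤ ((p : ℤ) - 1) * ((d : ℤ) - 1) - 2 ∧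
        ((y.1 : ℤ) + 1) * ((p : ℤ) - 1) ≤ (y.2 : ℤ) * d} =
      {y : ℕ × ℕ | y.1 < d ∧ γ * (y.1 + 1) ≤ y.2 ∧ y.2 < γ * (d - 1 - y.1)} := by
    ext ⟨b, r⟩
    simp only [Set.mem_ofPred_eq]
    rw [H_infty_ineqs_iff hpγ (by positivity) (by exact_mod_cast hd) (by positivity), Nat.cast_lt]
    refine and_congr_right fun hb => and_congr (by norm_cast) ?_
    rw [show (d : ℤ) - 1 - b = ((d - 1 - b : ℕ) : ℤ) by omega]
    norm_cast
  have hsum : ∑ b ∈ range d, (γ * (d - 1 - b) - γ * (b + 1)) = γ * ((d - 1) ^ 2 / 4) := by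
    simp only [← Nat.mul_sub, show ∀ b, d - 1 - b - (b + 1) = d - 2 * (b + 1) by omega]
    rw [← mul_sum, sum_range_sub_two_mul_succ]
  rw [card_setOf_nonneg_int_prod, hH,
    card_setOf_fst_lt_snd_mem_Ico d (fun b => γ * (b + 1)) (fun b => γ * (d - 1 - b)), hsum, hγ]
  split_ifs with hd_even
  · refine (Nat.div_eq_of_eq_mul_left four_pos ?_).symm
    rw [mul_right_comm, ← four_mul_sq_pred_div_four_of_even hd_even]
    ring
  · refine (Nat.div_eq_of_eq_mul_left (by positivity) ?_).symm
    conv_lhs => rw [← four_mul_sq_pred_div_four_of_odd (Nat.not_even_iff_odd.mp hd_even)]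
    ring
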